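/- arXiv:1208.3490 — 2 statements merged into one kernel-verified Lean document; each statement's English description precedes it below -/
import Mathlib

section
/- Let T be a positive operator on a real Banach lattice such that T*x₀* = λx₀* for some strictly positive functional x₀*. Then for any x ∈ X with Tx ≥ λx or Tx ≤ λx, we have Tx₊ = λx₊ and Tx₋ = λx₋. -/
open scoped ENNReal

variable {X : Type*}

def IsPositiveOp [NormedAddCommGroup X] [Lattice X] [HasSolidNorm X] [IsOrderedAddMonoid X] [NormedSpace ℝ X]
    (T : X →L[ℝ] X) : Prop := ∀ x : X, 0 ≤ x → 0 ≤ T x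

def IsClosedIdeal [NormedAddCommGroup X] [Lattice X] [HasSolidNorm X] [IsOrderedAddMonoid X] [NormedSpace ℝ X]
    (J : Submodule ℝ X) : Prop :=
  IsClosed (J : Set X) ∧ ∀ x y : X, |y| ≤ |x| → x ∈ J → y ∈ J

def IdealIrreducible [NormedAddCommGroup X] [Lattice X] [HasSolidNorm X] [IsOrderedAddMonoid X] [NormedSpace ℝ X]
    (T : X →L[ℝ] X) : Prop :=
  ∀ J : Submodule ℝ X, IsClosedIdeal J → (∀ x ∈ J, T x ∈ J) → J = ⊥ ∨ J = ⊤

/-- A band: a solid submodule closed under existing suprema. -/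
def IsBand [NormedAddCommGroup X] [Lattice X] [HasSolidNorm X] [IsOrderedAddMonoid X] [NormedSpace ℝ X]
    (J : Submodule ℝ X) : Prop :=
  (∀ x y : X, |y| ≤ |x| → x ∈ J → y ∈ J) ∧
    ∀ (A : Set X) (x : X), A ⊆ (J : Set X) → IsLUB A x → x ∈ J

def BandIrreducible [NormedAddCommGroup X] [Lattice X] [HasSolidNorm X] [IsOrderedAddMonoid X] [NormedSpace ℝ X]
    (T : X →L[ℝ] X) : Prop :=
  ∀ J : Submodule ℝ X, IsBand J → (∀ x ∈ J, T x ∈ J) → J = ⊥ ∨ J = ⊤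

def QuasiInterior [NormedAddCommGroup X] [Lattice X] [HasSolidNorm X] [IsOrderedAddMonoid X] [NormedSpace ℝ X]
    (x : X) : Prop :=
  closure {y : X | ∃ c : ℝ, |y| ≤ c • x} = Set.univ

/-- A weak (order) unit. -/
def WeakUnit [NormedAddCommGroup X] [Lattice X] [HasSolidNorm X] [IsOrderedAddMonoid X] [NormedSpace ℝ X]
    (x : X) : Prop := 0 < x ∧ ∀ y : X, |y| ⊓ x = 0 → y = 0

def IsPositiveFunc [NormedAddCommGroup X] [Lattice X] [HasSolidNorm X] [IsOrderedAddMonoid X] [NormedSpace ℝ X]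
    (f : StrongDual ℝ X) : Prop := ∀ x : X, 0 ≤ x → 0 ≤ f x

def StrictlyPositiveFunc [NormedAddCommGroup X] [Lattice X] [HasSolidNorm X] [IsOrderedAddMonoid X] [NormedSpace ℝ X]
    (f : StrongDual ℝ X) : Prop := ∀ x : X, 0 < x → 0 < f x

noncomputable def adjOp [NormedAddCommGroup X] [Lattice X] [HasSolidNorm X] [IsOrderedAddMonoid X] [NormedSpace ℝ X]
    (T : X →L[ℝ] X) : StrongDual ℝ X →L[ℝ] StrongDual ℝ X :=
  (ContinuousLinearMap.compL ℝ X X ℝ).flip T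

/-- `T` is σ-order continuous: `x_n ↓ 0` implies `T x_n ↓ 0`. -/
def SigmaOrderContinuousOp [NormedAddCommGroup X] [Lattice X] [HasSolidNorm X] [IsOrderedAddMonoid X] [NormedSpace ℝ X]
    (T : X →L[ℝ] X) : Prop :=
  ∀ u : ℕ → X, Antitone u → IsGLB (Set.range u) 0 →
    IsGLB (Set.range fun n => T (u n)) 0

/-- A σ-order continuous functional. -/
def SigmaOrderContinuousFunc [NormedAddCommGroup X] [Lattice X] [HasSolidNorm X] [IsOrderedAddMonoid X] [NormedSpace ℝ X]
    (f : StrongDual ℝ X) : Prop :=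
  ∀ u : ℕ → X, Antitone u → IsGLB (Set.range u) 0 →
    Filter.Tendsto (fun n => f (u n)) Filter.atTop (nhds 0)

/-- A set is relatively weakly compact. -/
def RelWeaklyCompact [NormedAddCommGroup X] [Lattice X] [HasSolidNorm X] [IsOrderedAddMonoid X] [NormedSpace ℝ X]
    (s : Set X) : Prop :=
  IsCompact (closure ((toWeakSpace ℝ X) '' s))

/-- `T` is order weakly compact: `T[0,x]` is relatively weakly compact for all `x > 0`. -/
def OrderWeaklyCompactOp [NormedAddCommGroup X] [Lattice X] [HasSolidNorm X] [IsOrderedAddMonoid X] [NormedSpace ℝ X]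
    (T : X →L[ℝ] X) : Prop :=
  ∀ x : X, 0 < x → RelWeaklyCompact (T '' Set.Icc 0 x)

/-!
Since `T* x₀* = λ x₀*`, the functional `x₀*` vanishes on `T y - λ y` for every `y`; being strictly
positive, it forces `T y = λ y` as soon as `λ y ≤ T y`. By positivity of `T`, `λ x ≤ T x` passes to
`λ x₊ ≤ T x₊`, so `T x₊ = λ x₊` and `T x = λ x`, hence also `T x₋ = T x₊ - T x = λ x₋`. The case
`T x ≤ λ x` is the previous one for `-x`. The only subtlety is that the order of a normed lattice
is compatible with real scalars, which follows from dyadic approximation and closedness of the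
positive cone.
-/

open Filter

theorem nonneg_of_two_pow_nsmul_nonneg {α : Type*} [Lattice α] [AddGroup α] [AddLeftMono α]
    [AddRightMono α] {a : α} : ∀ k : ℕ, 0 ≤ 2 ^ k • a → 0 ≤ a
  | 0, h => by simpa using h
  | k + 1, h => nsmul_two_semiclosed <| nonneg_of_two_pow_nsmul_nonneg k <| by
      rwa [← mul_nsmul, ← pow_succ']

theorem dyadic_smul_nonneg {E : Type*} [AddCommGroup E] [Lattice E] [IsOrderedAddMonoid E]
    [Module ℝ E] (k n : ℕ) {y : E} (hy : 0 ≤ y) : 0 ≤ ((k : ℝ) / 2 ^ n) • y := by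
  refine nonneg_of_two_pow_nsmul_nonneg n ?_
  rw [← Nat.cast_smul_eq_nsmul ℝ, smul_smul, Nat.cast_pow, Nat.cast_ofNat,
    mul_div_cancel₀ _ (by positivity), Nat.cast_smul_eq_nsmul]
  exact nsmul_nonneg hy k

section SolidNorm

variable {E : Type*} [NormedAddCommGroup E] [Lattice E] [HasSolidNorm E] [IsOrderedAddMonoid E]
  [NormedSpace ℝ E]

theorem HasSolidNorm.smul_nonneg {c : ℝ} (hc : 0 ≤ c) {y : E} (hy : 0 ≤ y) : 0 ≤ c • y := by
  have hdyadic : Tendsto (fun n : ℕ => ((⌊c * 2 ^ n⌋₊ : ℝ) / 2 ^ n) • y) atTop (nhds (c • y)) :=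
    ((tendsto_nat_floor_mul_div_atTop hc).comp
      (tendsto_pow_atTop_atTop_of_one_lt one_lt_two)).smul_const y
  exact isClosed_Ici.mem_of_tendsto hdyadic
    (Eventually.of_forall fun n => dyadic_smul_nonneg _ n hy)

instance HasSolidNorm.isOrderedModule : IsOrderedModule ℝ E :=
  .of_smul_nonneg fun _ hc _ hy => HasSolidNorm.smul_nonneg hc hy

end SolidNorm

section OrderedModule

variable {E : Type*} [AddCommGroup E] [Lattice E] [IsOrderedAddMonoid E] [Module ℝ E]
  [PosSMulMono ℝ E]

theorem smul_posPart_le_of_smul_le {T : E →ₗ[ℝ] E} (hT : ∀ y, 0 ≤ y → 0 ≤ T y) {l : ℝ} {x : E}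
    (hx : l • x ≤ T x) : l • (x ⊔ 0) ≤ T (x ⊔ 0) := by
  have hTpos : 0 ≤ T (x ⊔ 0) := hT _ le_sup_right
  rcases le_or_gt l 0 with hl | hl
  · exact (smul_nonpos_of_nonpos_of_nonneg hl le_sup_right).trans hTpos
  · have hTx : T x ≤ T (x ⊔ 0) := by simpa using hT _ (sub_nonneg.2 (le_sup_left : x ≤ x ⊔ 0))
    calc l • (x ⊔ 0) = l • x ⊔ l • 0 := (OrderIso.smulRight (β := E) hl).map_sup x 0
      _ = l • x ⊔ 0 := by rw [smul_zero]
      _ ≤ T (x ⊔ 0) := sup_le (hx.trans hTx) hTpos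

end OrderedModule

theorem eq_of_le_of_map_eq_of_strictlyPositive {E F : Type*} [AddCommGroup E] [PartialOrder E]
    [IsOrderedAddMonoid E] [FunLike F E ℝ] [AddMonoidHomClass F E ℝ] {f : F}
    (hf : ∀ y, 0 < y → 0 < f y) {a b : E} (hab : a ≤ b) (hfab : f a = f b) : a = b := by
  by_contra hne
  have := hf (b - a) (sub_pos.2 (hab.lt_of_ne hne))
  rw [map_sub, hfab, sub_self] at this
  exact this.false

section Eigenfunctional

variable [NormedAddCommGroup X] [Lattice X] [HasSolidNorm X] [IsOrderedAddMonoid X]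
  [NormedSpace ℝ X] {T : X →L[ℝ] X} {l : ℝ} {f₀ : StrongDual ℝ X}

theorem adjOp_apply (f : StrongDual ℝ X) (y : X) : adjOp T f y = f (T y) := rfl

theorem map_eq_smul_of_smul_le (hf₀ : StrictlyPositiveFunc f₀) (heig : adjOp T f₀ = l • f₀)
    {y : X} (hy : l • y ≤ T y) : T y = l • y := by
  refine (eq_of_le_of_map_eq_of_strictlyPositive hf₀ hy ?_).symm
  rw [← adjOp_apply, heig, map_smul, FunLike.coe_smul, Pi.smul_apply]

theorem map_posPart_negPart_eq_smul_of_smul_le (hT : IsPositiveOp T)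
    (hf₀ : StrictlyPositiveFunc f₀) (heig : adjOp T f₀ = l • f₀) {x : X} (hx : l • x ≤ T x) :
    T (x ⊔ 0) = l • (x ⊔ 0) ∧ T (-x ⊔ 0) = l • (-x ⊔ 0) := by
  have hpos : T (x ⊔ 0) = l • (x ⊔ 0) :=
    map_eq_smul_of_smul_le hf₀ heig (smul_posPart_le_of_smul_le (T := T.toLinearMap) hT hx)
  have hneg : -x ⊔ 0 = x ⊔ 0 - x := by
    rw [← negPart_def, ← posPart_def, eq_sub_iff_add_eq, ← eq_sub_iff_add_eq', posPart_sub_negPart]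
  refine ⟨hpos, ?_⟩
  rw [hneg, map_sub, smul_sub, hpos, map_eq_smul_of_smul_le hf₀ heig hx]

end Eigenfunctional

theorem stmt9 [NormedAddCommGroup X] [Lattice X] [HasSolidNorm X] [IsOrderedAddMonoid X] [NormedSpace ℝ X]
    (T : X →L[ℝ] X) (hT : IsPositiveOp T)
    (l : ℝ) (f₀ : StrongDual ℝ X) (hf₀ : StrictlyPositiveFunc f₀)
    (heig : adjOp T f₀ = l • f₀)
    (x : X) (hx : l • x ≤ T x ∨ T x ≤ l • x) :
    T (x ⊔ 0) = l • (x ⊔ 0) ∧ T (-x ⊔ 0) = l • (-x ⊔ 0) := by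
  rcases hx with hx | hx
  · exact map_posPart_negPart_eq_smul_of_smul_le hT hf₀ heig hx
  · have hx' : l • -x ≤ T (-x) := by rw [smul_neg, map_neg]; exact neg_le_neg hx
    obtain ⟨hneg, hpos⟩ := map_posPart_negPart_eq_smul_of_smul_le hT hf₀ heig hx'
    rw [neg_neg] at hpos
    exact ⟨hpos, hneg⟩
end

section
/- If T is a σ-order continuous, order weakly compact positive operator on a real Banach lattice, then T is σ-order-to-norm continuous: x_n ↓ 0 implies ‖Tx_n‖ → 0. -/
open scoped ENNReal

variable {X : Type*}

/-!
Put `y n = T (u n)`. It decreases to `0` and stays in the relatively weakly compact set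
`T '' [0, u 0]`, so it has a weak cluster point `z`. Order intervals are closed and convex, hence
weakly closed, so `0 ≤ z ≤ y m` for every `m` and `z = 0`. By Mazur's theorem `0` is then a norm
limit of convex combinations of the `y n`; each such combination dominates some `y N`, hence every
`y n` with `n ≥ N`, and solidity of the norm gives `‖y n‖ → 0`.
-/

open Filter Topology

section OrderedTVS

variable {E : Type*} [AddCommGroup E] [Lattice E] [IsOrderedAddMonoid E] [Module ℝ E]

lemma dyadic_smul_nonneg_s10 {x : E} (hx : 0 ≤ x) (m k : ℕ) : 0 ≤ ((m : ℝ) / 2 ^ k) • x := by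
  induction k with
  | zero => simpa [Nat.cast_smul_eq_nsmul] using nsmul_nonneg hx m
  | succ k ih =>
    refine nsmul_two_semiclosed ?_
    rw [two_nsmul, ← add_smul]
    convert ih using 2
    rw [pow_succ]
    ring

variable [TopologicalSpace E] [ContinuousSMul ℝ E] [OrderClosedTopology E]

-- Nonnegativity passes from `x` to its dyadic multiples, then by closedness of the cone to all
-- nonnegative multiples.
instance (priority := 100) OrderClosedTopology.toPosSMulMono : PosSMulMono ℝ E :=
  PosSMulMono.of_smul_nonneg fun c hc x hx => by
    have hdyadic : Tendsto (fun k : ℕ => (⌊c * 2 ^ k⌋₊ : ℝ) / 2 ^ k) atTop (𝓝 c) :=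
      (tendsto_nat_floor_mul_div_atTop hc).comp
        (tendsto_pow_atTop_atTop_of_one_lt one_lt_two)
    exact isClosed_Ici.mem_of_tendsto (hdyadic.smul_const x)
      (.of_forall fun k => dyadic_smul_nonneg_s10 hx _ k)

end OrderedTVS

lemma exists_le_of_mem_convexHull_range {𝕜 E ι : Type*} [Semiring 𝕜] [PartialOrder 𝕜]
    [AddCommMonoid E] [PartialOrder E] [IsOrderedAddMonoid E] [Module 𝕜 E] [PosSMulMono 𝕜 E]
    [Preorder ι] [IsDirected ι (· ≤ ·)] {y : ι → E} (hy : Antitone y) {v : E}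
    (hv : v ∈ convexHull 𝕜 (Set.range y)) : ∃ i, y i ≤ v := by
  refine convexHull_min (t := {v | ∃ i, y i ≤ v}) ?_ ?_ hv
  · rintro _ ⟨i, rfl⟩
    exact ⟨i, le_rfl⟩
  · rintro v₁ ⟨i₁, h₁⟩ v₂ ⟨i₂, h₂⟩ a b ha hb hab
    obtain ⟨j, hj₁, hj₂⟩ := directed_of (· ≤ ·) i₁ i₂
    refine ⟨j, ?_⟩
    calc y j = a • y j + b • y j := (Convex.combo_self hab _).symm
      _ ≤ a • v₁ + b • v₂ := add_le_add (smul_le_smul_of_nonneg_left ((hy hj₁).trans h₁) ha)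
          (smul_le_smul_of_nonneg_left ((hy hj₂).trans h₂) hb)

section WeakTopology

variable {E ι : Type*} [NormedAddCommGroup E] [NormedSpace ℝ E]

lemma mem_of_weak_mapClusterPt {s : Set E} (hconv : Convex ℝ s) (hs : IsClosed s)
    {l : Filter ι} {y : ι → E} {x : E}
    (hx : MapClusterPt (toWeakSpace ℝ E x) l (toWeakSpace ℝ E ∘ y)) (hy : ∀ᶠ i in l, y i ∈ s) :
    x ∈ s := by
  have hcl : toWeakSpace ℝ E x ∈ closure (toWeakSpace ℝ E '' s) :=
    mem_closure_iff_clusterPt.2 <| ClusterPt.mono hx <| le_principal_iff.2 <| mem_map.2 <|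
      hy.mono fun i hi => Set.mem_image_of_mem _ hi
  rw [← hconv.toWeakSpace_closure ℝ, hs.closure_eq] at hcl
  exact (toWeakSpace ℝ E).injective.mem_set_image.1 hcl

variable [Lattice E] [HasSolidNorm E] [IsOrderedAddMonoid E]

lemma IsPositiveOp.monotone {T : E →L[ℝ] E} (hT : IsPositiveOp T) : Monotone T :=
  fun a b hab => by simpa using hT (b - a) (sub_nonneg.2 hab)

lemma RelWeaklyCompact.exists_mapClusterPt {s : Set E} (hs : RelWeaklyCompact s) {l : Filter ι}
    [l.NeBot] {y : ι → E} (hy : ∀ i, y i ∈ s) :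
    ∃ x : E, MapClusterPt (toWeakSpace ℝ E x) l (toWeakSpace ℝ E ∘ y) := by
  obtain ⟨z, -, hz⟩ := hs.exists_clusterPt (f := map (toWeakSpace ℝ E ∘ y) l) <|
    le_principal_iff.2 <| mem_map.2 <| Eventually.of_forall fun i =>
      subset_closure (Set.mem_image_of_mem _ (hy i))
  exact ⟨(toWeakSpace ℝ E).symm z, by rwa [LinearEquiv.apply_symm_apply]⟩

variable [Preorder ι]

lemma eq_zero_of_weak_mapClusterPt {y : ι → E} (hy : Antitone y) (hglb : IsGLB (Set.range y) 0)
    {x : E} (hx : MapClusterPt (toWeakSpace ℝ E x) atTop (toWeakSpace ℝ E ∘ y)) : x = 0 := by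
  have hlower : x ∈ lowerBounds (Set.range y) := by
    rintro _ ⟨i, rfl⟩
    exact mem_of_weak_mapClusterPt (convex_Iic (y i)) isClosed_Iic hx <|
      (eventually_ge_atTop i).mono fun j hj => hy hj
  have hnonneg : 0 ≤ x := mem_of_weak_mapClusterPt (convex_Ici 0) isClosed_Ici hx <|
    .of_forall fun j => hglb.1 ⟨j, rfl⟩
  exact le_antisymm (hglb.2 hlower) hnonneg

lemma tendsto_zero_of_weak_mapClusterPt_zero [IsDirected ι (· ≤ ·)] {y : ι → E}
    (hy : Antitone y) (hy0 : ∀ i, 0 ≤ y i)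
    (h0 : MapClusterPt (toWeakSpace ℝ E 0) atTop (toWeakSpace ℝ E ∘ y)) :
    Tendsto y atTop (𝓝 0) := by
  have hmem : (0 : E) ∈ closure (convexHull ℝ (Set.range y)) :=
    mem_of_weak_mapClusterPt (convex_convexHull ℝ _).closure isClosed_closure h0 <|
      .of_forall fun i => subset_closure (subset_convexHull ℝ _ ⟨i, rfl⟩)
  refine Metric.tendsto_nhds.2 fun ε hε => ?_
  obtain ⟨v, hv, hvε⟩ := Metric.mem_closure_iff.1 hmem ε hε
  obtain ⟨i, hi⟩ := exists_le_of_mem_convexHull_range hy hv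
  filter_upwards [eventually_ge_atTop i] with j hj
  have hjv : y j ≤ v := (hy hj).trans hi
  calc dist (y j) 0 = ‖y j‖ := dist_zero_right _
    _ ≤ ‖v‖ := norm_le_norm_of_abs_le_abs (abs_le_abs_of_nonneg (hy0 j) hjv)
    _ < ε := by rwa [dist_zero_left] at hvε

lemma tendsto_zero_of_antitone_of_relWeaklyCompact [Nonempty ι] [IsDirected ι (· ≤ ·)]
    {y : ι → E} (hy : Antitone y) (hglb : IsGLB (Set.range y) 0) {s : Set E}
    (hs : RelWeaklyCompact s) (hys : ∀ i, y i ∈ s) : Tendsto y atTop (𝓝 0) := by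
  obtain ⟨x, hx⟩ := hs.exists_mapClusterPt (l := atTop) hys
  obtain rfl := eq_zero_of_weak_mapClusterPt hy hglb hx
  exact tendsto_zero_of_weak_mapClusterPt_zero hy (fun i => hglb.1 ⟨i, rfl⟩) hx

end WeakTopology

open Filter in
theorem stmt10 [NormedAddCommGroup X] [Lattice X] [HasSolidNorm X] [IsOrderedAddMonoid X] [NormedSpace ℝ X]
    (T : X →L[ℝ] X) (hT : IsPositiveOp T)
    (hoc : SigmaOrderContinuousOp T) (howc : OrderWeaklyCompactOp T) :
    ∀ u : ℕ → X, Antitone u → IsGLB (Set.range u) 0 →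
      Tendsto (fun n => ‖T (u n)‖) atTop (nhds 0) := by
  intro u hu hglb
  rw [← tendsto_zero_iff_norm_tendsto_zero]
  have hu0 : ∀ n, 0 ≤ u n := fun n => hglb.1 ⟨n, rfl⟩
  rcases (hu0 0).eq_or_lt with h0 | h0
  · have hu_zero : ∀ n, u n = 0 := fun n => le_antisymm (h0 ▸ hu n.zero_le) (hu0 n)
    simp [hu_zero]
  · exact tendsto_zero_of_antitone_of_relWeaklyCompact (hT.monotone.comp_antitone hu)
      (hoc u hu hglb) (howc (u 0) h0) fun n => ⟨u n, ⟨hu0 n, hu n.zero_le⟩, rfl⟩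
end
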